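/- Let a, b ∈ ℂ. Then Γ(a + z)/Γ(b + z) ~ z^{a−b} as z → +∞ along the positive reals; consequently, for fixed ν, μ ∈ ℂ, the coefficient c_k = (Γ(ν+μ+k+1)/Γ(ν+k+3/2))·((μ+1/2)_k / k!) satisfies c_k ~ k^{2μ−1}/Γ(μ+1/2) as k → ∞ (when 1/Γ(μ+1/2) ≠ 0). -/

import Mathlib

/-!
For `0 < re c`, Euler's Beta integral gives `Γ(a + z) z^c / Γ(a + c + z) = z^c B(c, a + z) / Γ(c)`,
and the substitution `x ↦ x / z` turns `z^c B(c, a + z)` into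
`∫₀^z (1 - x/z)^(a + z - 1) x^(c - 1) dx`. By dominated convergence (the integrand is bounded by
`x^(re c - 1) e^(-x/2)` once `z ≥ 2 - 2 re a`) this tends to `∫₀^∞ e^(-x) x^(c - 1) dx = Γ(c)`.
The functional equation `Γ(s + 1) = s Γ(s)` removes the restriction `0 < re c`, and the statement
about `c_k` is the product of the instances `(a, b) = (ν + μ + 1, ν + 3/2)` and `(μ + 1/2, 1)`.
-/

open Filter Topology Asymptotics Set MeasureTheory

namespace Complex

theorem tendsto_one_add_div_cpow_add_exp (t a : ℂ) :
    Tendsto (fun z : ℝ => (1 + t / z) ^ ((z : ℂ) + a)) atTop (𝓝 (exp t)) := by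
  have hbase : Tendsto (fun z : ℝ => 1 + t / z) atTop (𝓝 1) := by
    have := (tendsto_inv_atTop_zero.ofReal.const_mul t).const_add 1
    simpa [div_eq_mul_inv] using this
  have hcorr : Tendsto (fun z : ℝ => (1 + t / z) ^ a) atTop (𝓝 1) := by
    simpa [Function.comp_def] using
      (continuousAt_cpow_const (by simp : (1 : ℂ) ∈ slitPlane)).tendsto.comp hbase
  have := (tendsto_one_add_div_cpow_exp t).mul hcorr
  rw [mul_one] at this
  refine this.congr' ?_
  filter_upwards [hbase.eventually_ne one_ne_zero] with z hz
  rw [cpow_add _ _ hz]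

theorem norm_one_sub_cpow_le_exp {s : ℝ} (hs : s ≤ 1) {w : ℂ} (hw : 0 < w.re) :
    ‖(1 - (s : ℂ)) ^ w‖ ≤ Real.exp (-(s * w.re)) := by
  rw [← ofReal_one, ← ofReal_sub, norm_cpow_eq_rpow_re_of_nonneg (by linarith) hw.ne',
    ← neg_mul, Real.exp_mul]
  gcongr
  linarith [Real.add_one_le_exp (-s)]

theorem cpow_mul_betaIntegral_eq_integral (c u : ℂ) {z : ℝ} (hz : 0 < z) :
    (z : ℂ) ^ c * betaIntegral c u =
      ∫ x in 0..z, (1 - (x : ℂ) / z) ^ (u - 1) * (x : ℂ) ^ (c - 1) := by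
  have hz' : (z : ℂ) ≠ 0 := ofReal_ne_zero.mpr hz.ne'
  have hsubst := intervalIntegral.integral_comp_div (a := 0) (b := z)
    (fun x : ℝ => (x : ℂ) ^ (c - 1) * (1 - (x : ℂ)) ^ (u - 1)) hz.ne'
  rw [zero_div, div_self hz.ne', ← betaIntegral, real_smul] at hsubst
  calc (z : ℂ) ^ c * betaIntegral c u = (z : ℂ) ^ (c - 1) * (z * betaIntegral c u) := by
        rw [← mul_assoc, cpow_sub _ _ hz', cpow_one, div_mul_cancel₀ _ hz']
    _ = _ := by
        rw [← hsubst, ← intervalIntegral.integral_const_mul]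
        refine intervalIntegral.integral_congr fun x hx => ?_
        rw [uIcc_of_le hz.le] at hx
        have hx' : (x : ℂ) = ((x / z : ℝ) : ℂ) * (z : ℂ) := by
          push_cast; field_simp
        rw [hx', mul_cpow_ofReal_nonneg (div_nonneg hx.1 hz.le) hz.le, ← hx']
        push_cast
        ring

theorem norm_one_sub_div_cpow_le_exp {a : ℂ} {x z : ℝ} (hz : 0 < z) (hza : 2 - 2 * a.re ≤ z)
    (hx : 0 ≤ x) (hxz : x ≤ z) :
    ‖(1 - (x : ℂ) / z) ^ (a + z - 1)‖ ≤ Real.exp (-(2⁻¹ * x)) := by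
  have hw : z / 2 ≤ (a + z - 1).re := by
    simp only [sub_re, add_re, ofReal_re, one_re]
    linarith
  calc _ ≤ Real.exp (-(x / z * (a + z - 1).re)) := by
        rw [← ofReal_div]
        exact norm_one_sub_cpow_le_exp ((div_le_one hz).mpr hxz) (by linarith)
    _ ≤ Real.exp (-(2⁻¹ * x)) := by
        rw [Real.exp_le_exp, neg_le_neg_iff]
        calc 2⁻¹ * x = x / z * (z / 2) := by field_simp
          _ ≤ _ := by gcongr

theorem tendsto_cpow_mul_betaIntegral (a : ℂ) {c : ℂ} (hc : 0 < c.re) :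
    Tendsto (fun z : ℝ => (z : ℂ) ^ c * betaIntegral c (a + z)) atTop (𝓝 (Gamma c)) := by
  let F : ℝ → ℝ → ℂ := fun z => indicator (Ioc 0 z) fun x =>
    (1 - (x : ℂ) / z) ^ (a + z - 1) * (x : ℂ) ^ (c - 1)
  have hF : ∀ᶠ z in atTop, ∫ x in Ioi 0, F z x = (z : ℂ) ^ c * betaIntegral c (a + z) := by
    filter_upwards [eventually_gt_atTop 0] with z hz
    rw [cpow_mul_betaIntegral_eq_integral _ _ hz, integral_indicator measurableSet_Ioc,
      Measure.restrict_restrict_of_subset Ioc_subset_Ioi_self,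
      intervalIntegral.integral_of_le hz.le]
  have hmeas : ∀ z, AEStronglyMeasurable (F z) (volume.restrict (Ioi 0)) := fun z =>
    (Measurable.indicator (by fun_prop) measurableSet_Ioc).aestronglyMeasurable
  have hbound : ∀ᶠ z in atTop, ∀ᵐ x ∂(volume.restrict (Ioi 0)),
      ‖F z x‖ ≤ x ^ (c.re - 1) * Real.exp (-(2⁻¹ * x)) := by
    filter_upwards [eventually_gt_atTop 0, eventually_ge_atTop (2 - 2 * a.re)] with z hz hza
    refine (ae_restrict_iff' measurableSet_Ioi).mpr (ae_of_all _ fun x (hx : 0 < x) => ?_)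
    dsimp only [F]
    rcases lt_or_ge z x with hzx | hxz
    · rw [indicator_of_notMem (notMem_Ioc_of_gt hzx), norm_zero]
      positivity
    rw [indicator_of_mem (mem_Ioc.mpr ⟨hx, hxz⟩), norm_mul, norm_cpow_eq_rpow_re_of_pos hx,
      mul_comm, sub_re, one_re]
    gcongr
    exact norm_one_sub_div_cpow_le_exp hz hza hx.le hxz
  have hint : Integrable (fun x : ℝ => x ^ (c.re - 1) * Real.exp (-(2⁻¹ * x)))
      (volume.restrict (Ioi 0)) := by
    simpa [IntegrableOn] using integrableOn_rpow_mul_exp_neg_mul_rpow (p := 1)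
      (by linarith : (-1 : ℝ) < c.re - 1) one_pos (by norm_num : (0 : ℝ) < 2⁻¹)
  have hlim : ∀ᵐ x ∂(volume.restrict (Ioi 0)),
      Tendsto (fun z => F z x) atTop (𝓝 (Real.exp (-x) * (x : ℂ) ^ (c - 1))) := by
    refine (ae_restrict_iff' measurableSet_Ioi).mpr (ae_of_all _ fun x (hx : 0 < x) => ?_)
    have hF_eq : ∀ᶠ z : ℝ in atTop,
        (1 + (-x : ℂ) / z) ^ ((z : ℂ) + (a - 1)) * (x : ℂ) ^ (c - 1) = F z x := by
      filter_upwards [eventually_ge_atTop x] with z hxz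
      dsimp only [F]
      rw [indicator_of_mem (mem_Ioc.mpr ⟨hx, hxz⟩)]
      congr 2 <;> ring
    push_cast
    exact ((tendsto_one_add_div_cpow_add_exp _ _).mul_const _).congr' hF_eq
  rw [Gamma_eq_integral hc]
  exact (tendsto_integral_filter_of_dominated_convergence _ (.of_forall hmeas) hbound hint
    hlim).congr' hF

theorem eventually_zero_lt_re_add_ofReal (a : ℂ) : ∀ᶠ z : ℝ in atTop, 0 < (a + z).re := by
  filter_upwards [eventually_gt_atTop (-a.re)] with z hz
  simp only [add_re, ofReal_re]
  linarith

theorem isEquivalent_const_add_ofReal (a : ℂ) : (fun z : ℝ => a + z) ~[atTop] fun z => (z : ℂ) :=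
  IsEquivalent.refl.const_add_of_norm_tendsto_atTop <| by
    simpa only [Function.comp_def, norm_real, Real.norm_eq_abs] using tendsto_abs_atTop_atTop

theorem isEquivalent_Gamma_add_mul_cpow (a : ℂ) {c : ℂ} (hc : 0 < c.re) :
    (fun z : ℝ => Gamma (a + z) * (z : ℂ) ^ c) ~[atTop] fun z => Gamma (a + c + z) := by
  have hΓc := Gamma_ne_zero_of_re_pos hc
  rw [isEquivalent_iff_exists_eq_mul]
  refine ⟨fun z => (z : ℂ) ^ c * betaIntegral c (a + z) / Gamma c, ?_, ?_⟩
  · simpa [div_self hΓc] using (tendsto_cpow_mul_betaIntegral a hc).div_const (Gamma c)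
  · filter_upwards [eventually_zero_lt_re_add_ofReal a] with z hz
    have hbeta := Gamma_mul_Gamma_eq_betaIntegral hc hz
    rw [show c + (a + z) = a + c + z by ring] at hbeta
    simp only [Pi.mul_apply]
    field_simp
    linear_combination (z : ℂ) ^ c * hbeta

theorem isEquivalent_Gamma_add_nat_add (a : ℂ) (n : ℕ) :
    (fun z : ℝ => Gamma (a + n + z)) ~[atTop] fun z => Gamma (a + z) * (z : ℂ) ^ n := by
  induction n with
  | zero => simpa using IsEquivalent.refl
  | succ n ih =>
    have hrec : (fun z : ℝ => Gamma (a + (n + 1 : ℕ) + z)) =ᶠ[atTop]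
        fun z => (a + n + z) * Gamma (a + n + z) := by
      filter_upwards [eventually_zero_lt_re_add_ofReal (a + n)] with z hz
      rw [← Gamma_add_one _ fun h => by simp [h] at hz]
      push_cast
      ring_nf
    refine (hrec.trans_isEquivalent ((isEquivalent_const_add_ofReal _).mul ih)).congr_right ?_
    exact .of_forall fun z => by simp only [Pi.mul_apply]; ring

theorem isEquivalent_Gamma_add (a b : ℂ) :
    (fun z : ℝ => Gamma (a + z)) ~[atTop] fun z => Gamma (b + z) * (z : ℂ) ^ (a - b) := by
  obtain ⟨n, hn⟩ := exists_nat_gt (b - a).re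
  have hc : 0 < (a + n - b).re := by
    simp only [sub_re, add_re, natCast_re] at hn ⊢
    linarith
  have hshift := isEquivalent_Gamma_add_mul_cpow b hc
  rw [show b + (a + n - b) = a + n by ring] at hshift
  have h := ((isEquivalent_Gamma_add_nat_add a n).symm.trans hshift.symm).div
    (IsEquivalent.refl (u := fun z : ℝ => (z : ℂ) ^ n))
  refine (h.congr_left ?_).congr_right ?_
  · filter_upwards [eventually_gt_atTop 0] with z hz
    simp [ofReal_ne_zero.mpr hz.ne']
  · filter_upwards [eventually_gt_atTop 0] with z hz
    have hz' : (z : ℂ) ≠ 0 := ofReal_ne_zero.mpr hz.ne'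
    simp only [Pi.div_apply]
    rw [show a + n - b = (a - b) + n by ring, cpow_add _ _ hz', cpow_natCast]
    field_simp

theorem tendsto_Gamma_add_div_Gamma_add_div_cpow (a b : ℂ) :
    Tendsto (fun z : ℝ => Gamma (a + z) / Gamma (b + z) / (z : ℂ) ^ (a - b)) atTop (𝓝 1) := by
  have hne : ∀ᶠ z : ℝ in atTop, Gamma (b + z) * (z : ℂ) ^ (a - b) ≠ 0 := by
    filter_upwards [eventually_zero_lt_re_add_ofReal b, eventually_gt_atTop 0] with z hb hz
    exact mul_ne_zero (Gamma_ne_zero_of_re_pos hb) (by simp [cpow_eq_zero_iff, hz.ne'])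
  simpa only [Pi.div_def, div_div] using
    (isEquivalent_iff_tendsto_one hne).mp (isEquivalent_Gamma_add a b)

theorem tendsto_Gamma_div_Gamma_mul_pochhammer_div_cpow (ν μ : ℂ) (hμ : Gamma (μ + 1 / 2) ≠ 0) :
    Tendsto (fun k : ℕ =>
      (Gamma (ν + μ + k + 1) / Gamma (ν + k + 3 / 2) *
        (Gamma (μ + 1 / 2 + k) / Gamma (μ + 1 / 2) / (Nat.factorial k : ℂ))) /
      ((k : ℂ) ^ (2 * μ - 1) / Gamma (μ + 1 / 2))) atTop (𝓝 1) := by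
  have hA := (tendsto_Gamma_add_div_Gamma_add_div_cpow (ν + μ + 1) (ν + 3 / 2)).comp
    tendsto_natCast_atTop_atTop
  have hB := (tendsto_Gamma_add_div_Gamma_add_div_cpow (μ + 1 / 2) 1).comp
    tendsto_natCast_atTop_atTop
  refine (mul_one (1 : ℂ) ▸ hA.mul hB).congr' ?_
  filter_upwards [eventually_ge_atTop 1,
    tendsto_natCast_atTop_atTop.eventually (eventually_zero_lt_re_add_ofReal (ν + 3 / 2))]
    with k hk hν
  have hk' : (k : ℂ) ≠ 0 := Nat.cast_ne_zero.mpr (by omega)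
  have hΓν := Gamma_ne_zero_of_re_pos hν
  have hpow : (k : ℂ) ^ (2 * μ - 1) =
      (k : ℂ) ^ (ν + μ + 1 - (ν + 3 / 2)) * (k : ℂ) ^ (μ + 1 / 2 - 1) := by
    rw [← cpow_add _ _ hk']
    ring_nf
  simp only [Function.comp_apply, ofReal_natCast] at hΓν ⊢
  rw [hpow, add_comm 1, Gamma_nat_eq_factorial, add_right_comm (ν + μ) (k : ℂ),
    add_right_comm ν (k : ℂ)]
  have hp : (k : ℂ) ^ (ν + μ + 1 - (ν + 3 / 2)) ≠ 0 := by simp [cpow_eq_zero_iff, hk']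
  have hq : (k : ℂ) ^ (μ + 1 / 2 - 1) ≠ 0 := by simp [cpow_eq_zero_iff, hk']
  have hfact : (k.factorial : ℂ) ≠ 0 := by exact_mod_cast k.factorial_ne_zero
  -- Otherwise `field_simp` normalises the arguments of `Gamma` and loses track of `hΓν` and `hμ`.
  generalize Gamma (ν + 3 / 2 + k) = B at hΓν ⊢
  generalize Gamma (μ + 1 / 2) = D at hμ ⊢
  field_simp

end Complex

theorem gamma_ratio_asymptotics (a b : ℂ) (ν μ : ℂ) (hμ : 1 / Complex.Gamma (μ + 1 / 2) ≠ 0) :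
    Tendsto (fun z : ℝ =>
      Complex.Gamma (a + z) / Complex.Gamma (b + z) / (z : ℂ) ^ (a - b)) atTop (nhds 1) ∧
    Tendsto (fun k : ℕ =>
      (Complex.Gamma (ν + μ + k + 1) / Complex.Gamma (ν + k + 3 / 2) *
        (Complex.Gamma (μ + 1 / 2 + k) / Complex.Gamma (μ + 1 / 2) / (Nat.factorial k : ℂ))) /
      ((k : ℂ) ^ (2 * μ - 1) / Complex.Gamma (μ + 1 / 2))) atTop (nhds 1) :=
  ⟨Complex.tendsto_Gamma_add_div_Gamma_add_div_cpow a b,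
    Complex.tendsto_Gamma_div_Gamma_mul_pochhammer_div_cpow ν μ (by simpa using hμ)⟩
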